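/- arXiv:2401.17778 — 7 statements merged into one kernel-verified Lean document; each statement's English description precedes it below -/
import Mathlib

section
/- Let E : X → ℝ be Gâteaux differentiable on a real Hilbert space X with derivative dE(v) = A v - F, where A is strongly monotone with constant α and Lipschitz continuous with constant L. If u⋆_H minimizes E over a closed subspace X_H (equivalently ⟨A u⋆_H, v_H⟩ = F(v_H) for all v_H ∈ X_H), then for all v_H ∈ X_H: (α/2)‖v_H - u⋆_H‖² ≤ E(v_H) - E(u⋆_H) ≤ (L/2)‖v_H - u⋆_H‖². -/
/-- Energy-norm equivalence for the Galerkin solution. -/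
theorem energy_norm_equivalence
    {X : Type*} [NormedAddCommGroup X] [InnerProductSpace ℝ X] [CompleteSpace X]
    (A : X → X →L[ℝ] ℝ) (F : X →L[ℝ] ℝ) (E : X → ℝ) (α L : ℝ)
    (hα : 0 < α) (hαL : α ≤ L)
    (hmono : ∀ u v : X, α * ‖u - v‖ ^ 2 ≤ A u (u - v) - A v (u - v))
    (hlip : ∀ u v w : X, A u w - A v w ≤ L * ‖u - v‖ * ‖w‖)
    (hE : ∀ u w : X, ∀ t : ℝ, HasDerivAt (fun s : ℝ => E (u + s • w))
      (A (u + t • w) w - F w) t)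
    (XH : Submodule ℝ X) (hXH : IsClosed (XH : Set X))
    (uH : X) (huH : uH ∈ XH) (huHsol : ∀ vH ∈ XH, A uH vH = F vH) :
    ∀ vH ∈ XH,
      α / 2 * ‖vH - uH‖ ^ 2 ≤ E vH - E uH ∧
      E vH - E uH ≤ L / 2 * ‖vH - uH‖ ^ 2 := by
  intro vH hvH
  set w : X := vH - uH with hw
  have hwXH : w ∈ XH := XH.sub_mem hvH huH
  have hFw : A uH w = F w := huHsol w hwXH
  have hd : ∀ t : ℝ, HasDerivAt (fun s : ℝ => E (uH + s • w))
      (A (uH + t • w) w - A uH w) t := by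
    intro t; rw [hFw]; exact hE uH w t
  have h0 : uH + (0:ℝ) • w = uH := by simp
  have h1 : uH + (1:ℝ) • w = vH := by simp [hw]
  -- bound on the derivative for t ∈ (0,1)
  have hbound : ∀ t : ℝ, 0 < t →
      α * t * ‖w‖ ^ 2 ≤ A (uH + t • w) w - A uH w ∧
      A (uH + t • w) w - A uH w ≤ L * t * ‖w‖ ^ 2 := by
    intro t ht
    have hsub : uH + t • w - uH = t • w := by abel
    constructor
    · have := hmono (uH + t • w) uH
      rw [hsub] at this
      have hn : ‖t • w‖ ^ 2 = t ^ 2 * ‖w‖ ^ 2 := by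
        rw [norm_smul, mul_pow, Real.norm_eq_abs, sq_abs]
      have hs1 : (A (uH + t • w)) (t • w) = t * A (uH + t • w) w := by
        simp [map_smul]
      have hs2 : (A uH) (t • w) = t * A uH w := by simp [map_smul]
      rw [hn, hs1, hs2] at this
      nlinarith
    · have := hlip (uH + t • w) uH w
      rw [hsub, norm_smul, Real.norm_eq_abs, abs_of_pos ht] at this
      nlinarith
  constructor
  · -- lower bound
    have key : ∀ t : ℝ, HasDerivAt
        (fun s : ℝ => E (uH + s • w) - α / 2 * ‖w‖ ^ 2 * s ^ 2)
        (A (uH + t • w) w - A uH w - α / 2 * ‖w‖ ^ 2 * (2 * t ^ 1)) t := by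
      intro t
      exact (hd t).sub ((hasDerivAt_pow 2 t).const_mul (α / 2 * ‖w‖ ^ 2))
    have hmonoF : MonotoneOn (fun s : ℝ => E (uH + s • w) - α / 2 * ‖w‖ ^ 2 * s ^ 2)
        (Set.Icc 0 1) := by
      apply monotoneOn_of_deriv_nonneg (convex_Icc 0 1)
      · exact fun t _ => ((key t).differentiableAt).continuousAt.continuousWithinAt
      · exact fun t _ => ((key t).differentiableAt).differentiableWithinAt
      · intro t ht
        rw [interior_Icc] at ht
        rw [(key t).deriv]
        have := (hbound t ht.1).1
        nlinarith
    have := hmonoF (Set.mem_Icc.2 ⟨le_refl 0, zero_le_one⟩)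
      (Set.mem_Icc.2 ⟨zero_le_one, le_refl 1⟩) zero_le_one
    simp only [h0, h1] at this
    nlinarith [this]
  · -- upper bound
    have key : ∀ t : ℝ, HasDerivAt
        (fun s : ℝ => L / 2 * ‖w‖ ^ 2 * s ^ 2 - E (uH + s • w))
        (L / 2 * ‖w‖ ^ 2 * (2 * t ^ 1) - (A (uH + t • w) w - A uH w)) t := by
      intro t
      exact ((hasDerivAt_pow 2 t).const_mul (L / 2 * ‖w‖ ^ 2)).sub (hd t)
    have hmonoF : MonotoneOn (fun s : ℝ => L / 2 * ‖w‖ ^ 2 * s ^ 2 - E (uH + s • w))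
        (Set.Icc 0 1) := by
      apply monotoneOn_of_deriv_nonneg (convex_Icc 0 1)
      · exact fun t _ => ((key t).differentiableAt).continuousAt.continuousWithinAt
      · exact fun t _ => ((key t).differentiableAt).differentiableWithinAt
      · intro t ht
        rw [interior_Icc] at ht
        rw [(key t).deriv]
        have := (hbound t ht.1).2
        nlinarith
    have := hmonoF (Set.mem_Icc.2 ⟨le_refl 0, zero_le_one⟩)
      (Set.mem_Icc.2 ⟨zero_le_one, le_refl 1⟩) zero_le_one
    simp only [h0, h1] at this
    nlinarith [this]
end

section
/- Under the setting of the energy identity, with A strongly monotone (constant α) and Lipschitz (constant L), for w' = w (the linearization point) and any v ∈ X_H: d²(v, w) ≥ -(L/2)‖v - w‖² + a(w; u^{k,⋆} - w, v - w) and d²(v, w) ≤ -(α/2)‖v - w‖² + a(w; u^{k,⋆} - w, v - w). -/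
/-!
Along the segment `t ↦ w + t • d`, `d = v - w`, the derivative of `E` exceeds its value at `t = 0`
by at least `α t ‖d‖²` (strong monotonicity) and at most `L t ‖d‖²` (Lipschitz continuity);
integrating over `[0, 1]` gives the two quadratic bounds, and the linearized equation tested
with `v - w ∈ X_H` identifies the first-order term `A w d - F d` with `-a(w; u* - w, v - w)`.
-/

open Set

theorem le_image_one_of_linear_le_deriv {f f' : ℝ → ℝ} {c : ℝ}
    (hf : ∀ t, HasDerivAt f (f' t) t) (h : ∀ t ∈ Ioo (0 : ℝ) 1, f' 0 + c * t ≤ f' t) :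
    f 0 + f' 0 + c / 2 ≤ f 1 := by
  set g : ℝ → ℝ := fun t => f t - f' 0 * t - c * (t ^ 2 / 2)
  have hg : ∀ t, HasDerivAt g (f' t - f' 0 - c * t) t := fun t => by
    have hq := ((hasDerivAt_pow 2 t).div_const 2).const_mul c
    refine (((hf t).sub ((hasDerivAt_id' t).const_mul (f' 0))).sub hq).congr_deriv ?_
    push_cast
    ring
  have hmono : MonotoneOn g (Icc 0 1) := by
    refine monotoneOn_of_hasDerivWithinAt_nonneg (convex_Icc 0 1)
      (fun t _ => (hg t).continuousAt.continuousWithinAt)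
      (fun t _ => (hg t).hasDerivWithinAt) fun t ht => ?_
    rw [interior_Icc] at ht
    linarith [h t ht]
  have := hmono (left_mem_Icc.2 zero_le_one) (right_mem_Icc.2 zero_le_one) zero_le_one
  simp only [g] at this
  linarith

theorem image_one_le_of_deriv_le_linear {f f' : ℝ → ℝ} {c : ℝ}
    (hf : ∀ t, HasDerivAt f (f' t) t) (h : ∀ t ∈ Ioo (0 : ℝ) 1, f' t ≤ f' 0 + c * t) :
    f 1 ≤ f 0 + f' 0 + c / 2 := by
  have := le_image_one_of_linear_le_deriv (f := -f) (c := -c) (fun t => (hf t).neg)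
    fun t ht => by linarith [h t ht]
  simp only [Pi.neg_apply] at this
  linarith

section Segment

variable {X : Type*} [NormedAddCommGroup X] [NormedSpace ℝ X] {A : X → X →L[ℝ] ℝ} {α L : ℝ}

theorem mul_le_sub_apply_add_smul (hmono : ∀ u v : X, α * ‖u - v‖ ^ 2 ≤ A u (u - v) - A v (u - v))
    (w d : X) {t : ℝ} (ht : 0 < t) : α * ‖d‖ ^ 2 * t ≤ A (w + t • d) d - A w d := by
  have h := hmono (w + t • d) w
  rw [add_sub_cancel_left, norm_smul, Real.norm_of_nonneg ht.le, map_smul, map_smul,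
    smul_eq_mul, smul_eq_mul] at h
  nlinarith

theorem sub_apply_add_smul_le (hlip : ∀ u v w : X, A u w - A v w ≤ L * ‖u - v‖ * ‖w‖)
    (w d : X) {t : ℝ} (ht : 0 ≤ t) : A (w + t • d) d - A w d ≤ L * ‖d‖ ^ 2 * t := by
  have h := hlip (w + t • d) w d
  rw [add_sub_cancel_left, norm_smul, Real.norm_of_nonneg ht] at h
  linarith

variable {F : X →L[ℝ] ℝ} {E : X → ℝ}
  (hE : ∀ u d : X, ∀ t : ℝ, HasDerivAt (fun s : ℝ => E (u + s • d)) (A (u + t • d) d - F d) t)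
include hE

theorem energy_add_ge (hmono : ∀ u v : X, α * ‖u - v‖ ^ 2 ≤ A u (u - v) - A v (u - v))
    (w d : X) : E w + (A w d - F d) + α / 2 * ‖d‖ ^ 2 ≤ E (w + d) := by
  have := le_image_one_of_linear_le_deriv (c := α * ‖d‖ ^ 2) (hE w d) fun t ht => by
    simp only [zero_smul, add_zero]
    linarith [mul_le_sub_apply_add_smul hmono w d ht.1]
  simp only [zero_smul, one_smul, add_zero] at this
  linarith

theorem energy_add_le (hlip : ∀ u v w : X, A u w - A v w ≤ L * ‖u - v‖ * ‖w‖)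
    (w d : X) : E (w + d) ≤ E w + (A w d - F d) + L / 2 * ‖d‖ ^ 2 := by
  have := image_one_le_of_deriv_le_linear (c := L * ‖d‖ ^ 2) (hE w d) fun t ht => by
    simp only [zero_smul, add_zero]
    linarith [sub_apply_add_smul_le hlip w d ht.1.le]
  simp only [zero_smul, one_smul, add_zero] at this
  linarith

end Segment

theorem energy_bounds_at_linearization_point_general
    {X : Type*} [NormedAddCommGroup X] [InnerProductSpace ℝ X]
    (A : X → X →L[ℝ] ℝ) (F : X →L[ℝ] ℝ) (E : X → ℝ)
    (a : X → X → X → ℝ) (α L : ℝ)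
    (hmono : ∀ u v : X, α * ‖u - v‖ ^ 2 ≤ A u (u - v) - A v (u - v))
    (hlip : ∀ u v w : X, A u w - A v w ≤ L * ‖u - v‖ * ‖w‖)
    (hE : ∀ u d : X, ∀ t : ℝ, HasDerivAt (fun s : ℝ => E (u + s • d))
      (A (u + t • d) d - F d) t)
    (XH : Submodule ℝ X)
    (w : X) (hw : w ∈ XH)
    (ukstar : X)
    (hlin : ∀ v ∈ XH, a w (ukstar - w) v = F v - A w v) :
    ∀ v ∈ XH,
      -(L / 2) * ‖v - w‖ ^ 2 + a w (ukstar - w) (v - w) ≤ E w - E v ∧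
      E w - E v ≤ -(α / 2) * ‖v - w‖ ^ 2 + a w (ukstar - w) (v - w) := by
  intro v hv
  have hlin_v := hlin (v - w) (XH.sub_mem hv hw)
  have hlower := energy_add_ge hE hmono w (v - w)
  have hupper := energy_add_le hE hlip w (v - w)
  rw [add_sub_cancel] at hlower hupper
  constructor <;> linarith

/-- Two-sided bounds on the energy difference at the linearization point. -/
theorem energy_bounds_at_linearization_point
    {X : Type*} [NormedAddCommGroup X] [InnerProductSpace ℝ X] [CompleteSpace X]
    (A : X → X →L[ℝ] ℝ) (F : X →L[ℝ] ℝ) (E : X → ℝ)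
    (a : X → X → X → ℝ) (α L : ℝ)
    (hα : 0 < α) (hαL : α ≤ L)
    (hmono : ∀ u v : X, α * ‖u - v‖ ^ 2 ≤ A u (u - v) - A v (u - v))
    (hlip : ∀ u v w : X, A u w - A v w ≤ L * ‖u - v‖ * ‖w‖)
    (hE : ∀ u d : X, ∀ t : ℝ, HasDerivAt (fun s : ℝ => E (u + s • d))
      (A (u + t • d) d - F d) t)
    (XH : Submodule ℝ X) (hXH : IsClosed (XH : Set X))
    (w : X) (hw : w ∈ XH)
    (ukstar : X) (hukstar : ukstar ∈ XH)
    (hlin : ∀ v ∈ XH, a w (ukstar - w) v = F v - A w v) :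
    ∀ v ∈ XH,
      -(L / 2) * ‖v - w‖ ^ 2 + a w (ukstar - w) (v - w) ≤ E w - E v ∧
      E w - E v ≤ -(α / 2) * ‖v - w‖ ^ 2 + a w (ukstar - w) (v - w) :=
  energy_bounds_at_linearization_point_general A F E a α L hmono hlip hE XH w hw ukstar hlin
end

section
/- (R-linear convergence implies cost-rate equivalence via geometric series.) Let (H_n)_{n≥0} be a sequence of nonnegative reals with H_n ≤ C q^{n-m} H_m for all m < n, where C > 0 and 0 < q < 1, and let (T_n) be positive reals. Then for any s > 0: sup_n (Σ_{m ≤ n} T_m)^s H_n ≤ (C / (1 - q^{1/s})^s) · sup_n T_n^s H_n, provided T_m^s H_m ≤ M(s) := sup_n T_n^s H_n for all m. -/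
/-!
Write `r = q ^ (1 / s)`. Applying the decay hypothesis from `m` to `n` and then the bound by `M`
gives `T m ^ s * H n ≤ C * M * q ^ (n - m)`, i.e.
`T m * H n ^ (1 / s) ≤ (C * M) ^ (1 / s) * r ^ (n - m)`.
Summing over `m ≤ n` and bounding the geometric series by `1 / (1 - r)` yields
`(∑ m ≤ n, T m) * H n ^ (1 / s) ≤ (C * M) ^ (1 / s) / (1 - r)`;
raising to the power `s` gives the claim.
Taking `s`-th roots first avoids dividing by `H n`, which may vanish.
-/

open Finset Real

lemma sum_range_succ_le_div_one_sub_of_le_mul_pow {K : Type*} [Field K] [LinearOrder K]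
    [IsStrictOrderedRing K] {a : ℕ → K} {A r : K} {n : ℕ} (hA : 0 ≤ A) (hr0 : 0 ≤ r)
    (hr1 : r < 1) (ha : ∀ m ≤ n, a m ≤ A * r ^ (n - m)) :
    ∑ m ∈ range (n + 1), a m ≤ A / (1 - r) := calc
  ∑ m ∈ range (n + 1), a m ≤ ∑ m ∈ range (n + 1), A * r ^ (n - m) :=
    sum_le_sum fun m hm => ha m (Nat.lt_succ_iff.mp (mem_range.mp hm))
  _ = A * ∑ m ∈ Ico 0 (n + 1), r ^ m := by
    rw [← mul_sum, ← range_eq_Ico, ← sum_range_reflect (r ^ ·) (n + 1)]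
    simp only [Nat.add_sub_cancel]
  _ ≤ A * (r ^ 0 / (1 - r)) := mul_le_mul_of_nonneg_left (geom_sum_Ico_le_of_lt_one hr0 hr1) hA
  _ = A / (1 - r) := by rw [pow_zero, mul_one_div]

lemma mul_rpow_inv_le_rpow_inv_iff {x y z s : ℝ} (hx : 0 ≤ x) (hy : 0 ≤ y) (hz : 0 ≤ z)
    (hs : 0 < s) : x * y ^ s⁻¹ ≤ z ^ s⁻¹ ↔ x ^ s * y ≤ z := by
  rw [le_rpow_inv_iff_of_pos (by positivity) hz hs, mul_rpow hx (by positivity),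
    rpow_inv_rpow hy hs.ne']

/-- R-linear convergence implies equivalence of rates with respect to cost
(geometric series argument). -/
theorem rates_eq_complexity (H T : ℕ → ℝ) (C q s M : ℝ)
    (hH : ∀ n, 0 ≤ H n) (hT : ∀ n, 0 < T n)
    (hC : 0 < C) (hq0 : 0 < q) (hq1 : q < 1) (hs : 0 < s)
    (hlin : ∀ m n : ℕ, m ≤ n → H n ≤ C * q ^ (n - m) * H m)
    (hM : ∀ m, T m ^ s * H m ≤ M) :
    ∀ n, (∑ m ∈ Finset.range (n + 1), T m) ^ s * H n
      ≤ C / (1 - q ^ (1 / s)) ^ s * M := by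
  intro n
  rw [one_div]
  set r := q ^ s⁻¹ with hr
  have hr1 : r < 1 := rpow_lt_one hq0.le hq1 (by positivity)
  have hM0 : 0 ≤ M := (mul_nonneg (rpow_pos_of_pos (hT 0) s).le (hH 0)).trans (hM 0)
  have hterm (m : ℕ) (hm : m ≤ n) : T m * H n ^ s⁻¹ ≤ (C * M) ^ s⁻¹ * r ^ (n - m) := by
    rw [hr, rpow_pow_comm hq0.le, ← mul_rpow (by positivity) (by positivity),
      mul_rpow_inv_le_rpow_inv_iff (hT m).le (hH n) (by positivity) hs]
    calc T m ^ s * H n ≤ T m ^ s * (C * q ^ (n - m) * H m) :=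
          mul_le_mul_of_nonneg_left (hlin m n hm) (rpow_nonneg (hT m).le s)
      _ = C * q ^ (n - m) * (T m ^ s * H m) := by ring
      _ ≤ C * q ^ (n - m) * M := mul_le_mul_of_nonneg_left (hM m) (by positivity)
      _ = C * M * q ^ (n - m) := by ring
  have hsum : (∑ m ∈ range (n + 1), T m) * H n ^ s⁻¹ ≤ (C * M) ^ s⁻¹ / (1 - r) := by
    rw [sum_mul]
    exact sum_range_succ_le_div_one_sub_of_le_mul_pow (by positivity) (by positivity) hr1 hterm
  have hbound_nonneg : 0 ≤ C / (1 - r) ^ s * M := by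
    have := rpow_pos_of_pos (sub_pos.2 hr1) s
    positivity
  have hbound_root : (C * M) ^ s⁻¹ / (1 - r) = (C / (1 - r) ^ s * M) ^ s⁻¹ := by
    rw [div_mul_eq_mul_div, div_rpow (by positivity) (rpow_nonneg (sub_nonneg.2 hr1.le) s),
      rpow_rpow_inv (sub_nonneg.2 hr1.le) hs.ne']
  rwa [hbound_root, mul_rpow_inv_le_rpow_inv_iff (sum_nonneg fun m _ => (hT m).le) (hH n)
    hbound_nonneg hs] at hsum
end

section
/- (Tail-summability is equivalent to R-linear convergence.) Let (a_n)_{n≥0} be a sequence of nonnegative real numbers. Then the following are equivalent: (i) there exists C₁ > 0 such that Σ_{n' > n} a_{n'} ≤ C₁ a_n for all n; (ii) there exist C₂ > 0 and 0 < q < 1 such that a_n ≤ C₂ q^{n-m} a_m for all m ≤ n. -/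
/-!
If every tail is at most `C` times the preceding term, then the tails `T n = ∑_{k > n} a k`
satisfy `T n = a (n + 1) + T (n + 1) ≥ (1 + C⁻¹) T (n + 1)`, so they decay geometrically with
ratio `q = C / (1 + C)`; since `a (n + 1) ≤ T n` and `T m ≤ C a m`, the terms inherit this decay.
Conversely, a geometric bound `a n ≤ C₂ q ^ (n - m) a m` makes the series summable and bounds
each tail by the geometric series `C₂ a n (q + q² + ⋯) = C₂ q / (1 - q) · a n`.
-/

noncomputable def tailSum (a : ℕ → ℝ) (n : ℕ) : ℝ := ∑' k, a (n + 1 + k)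

section TailSum

variable {a : ℕ → ℝ}

theorem tailSum_nonneg (ha : ∀ n, 0 ≤ a n) (n : ℕ) : 0 ≤ tailSum a n :=
  tsum_nonneg fun _ => ha _

theorem Summable.summable_tail (hs : Summable a) (n : ℕ) : Summable fun k => a (n + 1 + k) := by
  simpa only [add_comm] using (summable_nat_add_iff (n + 1)).2 hs

theorem tailSum_eq_add_tailSum_succ (hs : Summable a) (n : ℕ) :
    tailSum a n = a (n + 1) + tailSum a (n + 1) := by
  rw [tailSum, (hs.summable_tail n).tsum_eq_zero_add, tailSum, add_zero]
  exact congrArg _ (tsum_congr fun k => congrArg a (by omega))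

theorem le_tailSum (ha : ∀ n, 0 ≤ a n) (hs : Summable a) (n : ℕ) : a (n + 1) ≤ tailSum a n := by
  rw [tailSum_eq_add_tailSum_succ hs]
  exact le_add_of_nonneg_right (tailSum_nonneg ha _)

section TailBound

variable {C : ℝ} (hs : Summable a) (hC : 0 ≤ C) (htail : ∀ n, tailSum a n ≤ C * a n)
include hs hC htail

theorem tailSum_succ_le (n : ℕ) : tailSum a (n + 1) ≤ C / (1 + C) * tailSum a n := by
  have hstep := tailSum_eq_add_tailSum_succ hs n
  have hnext := htail (n + 1)
  rw [div_mul_eq_mul_div, le_div_iff₀ (by positivity)]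
  nlinarith

theorem tailSum_add_le (m j : ℕ) : tailSum a (m + j) ≤ (C / (1 + C)) ^ j * tailSum a m :=
  le_geom (u := fun j => tailSum a (m + j)) (by positivity) j fun k _ =>
    tailSum_succ_le hs hC htail (m + k)

theorem le_mul_pow_mul_of_tailSum_le (ha : ∀ n, 0 ≤ a n) (m j : ℕ) :
    a (m + j) ≤ (1 + C) * (C / (1 + C)) ^ j * a m := by
  cases j with
  | zero =>
    rw [add_zero, pow_zero, mul_one, add_mul, one_mul]
    exact le_add_of_nonneg_right (mul_nonneg hC (ha m))
  | succ j =>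
    calc a (m + (j + 1)) ≤ tailSum a (m + j) := le_tailSum ha hs (m + j)
      _ ≤ (C / (1 + C)) ^ j * tailSum a m := tailSum_add_le hs hC htail m j
      _ ≤ (C / (1 + C)) ^ j * (C * a m) := by gcongr; exact htail m
      _ = (1 + C) * (C / (1 + C)) ^ (j + 1) * a m := by rw [pow_succ]; field_simp

end TailBound

section Geometric

variable {C q : ℝ} (hq₀ : 0 ≤ q) (hq₁ : q < 1)
  (h : ∀ m n : ℕ, m ≤ n → a n ≤ C * q ^ (n - m) * a m)
include hq₀ hq₁ h

theorem summable_of_le_mul_pow_sub_mul (ha : ∀ n, 0 ≤ a n) : Summable a :=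
  Summable.of_nonneg_of_le ha (fun n => by simpa [mul_right_comm] using h 0 n n.zero_le)
    ((summable_geometric_of_lt_one hq₀ hq₁).mul_left (C * a 0))

theorem tailSum_le_of_le_mul_pow_sub_mul (hs : Summable a) (n : ℕ) :
    tailSum a n ≤ C * q / (1 - q) * a n := by
  have hterm (k : ℕ) : a (n + 1 + k) ≤ C * a n * q * q ^ k := by
    have := h n (n + 1 + k) (by omega)
    rwa [show n + 1 + k - n = k + 1 by omega, pow_succ', mul_right_comm, ← mul_assoc] at this
  calc tailSum a n ≤ ∑' k : ℕ, C * a n * q * q ^ k :=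
        (hs.summable_tail n).tsum_le_tsum hterm
          ((summable_geometric_of_lt_one hq₀ hq₁).mul_left _)
    _ = C * q / (1 - q) * a n := by
        rw [tsum_mul_left, tsum_geometric_of_lt_one hq₀ hq₁, div_eq_mul_inv]
        ring

end Geometric

end TailSum

/-- Tail-summability is equivalent to R-linear convergence. -/
theorem tail_summability_iff_Rlinear (a : ℕ → ℝ) (ha : ∀ n, 0 ≤ a n) :
    ((Summable a) ∧ ∃ C₁ > 0, ∀ n, (∑' k : ℕ, a (n + 1 + k)) ≤ C₁ * a n) ↔
    (∃ C₂ > 0, ∃ q : ℝ, 0 < q ∧ q < 1 ∧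
      ∀ m n : ℕ, m ≤ n → a n ≤ C₂ * q ^ (n - m) * a m) := by
  constructor
  · rintro ⟨hs, C, hC, htail⟩
    refine ⟨1 + C, by positivity, C / (1 + C), by positivity,
      (div_lt_one (by positivity)).2 (lt_one_add C), fun m n hmn => ?_⟩
    obtain ⟨j, rfl⟩ := Nat.exists_eq_add_of_le hmn
    simpa using le_mul_pow_mul_of_tailSum_le hs hC.le htail ha m j
  · rintro ⟨C, hC, q, hq₀, hq₁, h⟩
    have hs : Summable a := summable_of_le_mul_pow_sub_mul hq₀.le hq₁ h ha
    have hq₁' : 0 < 1 - q := sub_pos.2 hq₁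
    exact ⟨hs, C * q / (1 - q), by positivity, tailSum_le_of_le_mul_pow_sub_mul hq₀.le hq₁ h hs⟩
end

section
/- (Estimator equivalence under small linearization stopping parameter.) Suppose η, η⋆ ≥ 0 and |η⋆ - η| ≤ δ·η with 0 ≤ δ < 1 (arising from stability plus the stopping criterion with δ = (λ/λ⋆)^{1/2}). Then (1 - δ)η ≤ η⋆ ≤ (1 + δ)η. Moreover, if θ_mark := ((θ^{1/2} + δ)/(1 - δ))², then for any partial sums η(R), η⋆(R) ≥ 0 with η(R) ≥ η⋆(R) - δη and η⋆(R) ≥ θ_mark^{1/2} η⋆, one concludes η(R) ≥ θ^{1/2} η, i.e., Dörfler marking for (η⋆, θ_mark) implies Dörfler marking for (η, θ). -/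
/-- Estimator equivalence and transfer of the Dörfler marking criterion. -/
theorem estimator_equivalence (η ηs ηR ηsR δ θ : ℝ)
    (hη : 0 ≤ η) (hηs : 0 ≤ ηs) (hηR : 0 ≤ ηR) (hηsR : 0 ≤ ηsR)
    (hδ0 : 0 ≤ δ) (hδ1 : δ < 1) (hθ0 : 0 < θ) (hθ1 : θ ≤ 1)
    (h1 : ηs ≤ η + δ * η) (h2 : η ≤ ηs + δ * η)
    (h3 : ηsR - δ * η ≤ ηR)
    (hmark : ((Real.sqrt θ + δ) / (1 - δ)) ^ 2 * ηs ^ 2 ≤ ηsR ^ 2) :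
    ((1 - δ) * η ≤ ηs ∧ ηs ≤ (1 + δ) * η) ∧ θ * η ^ 2 ≤ ηR ^ 2 := by
  have hsq : 0 ≤ Real.sqrt θ := Real.sqrt_nonneg θ
  have hden : 0 < 1 - δ := by linarith
  have hc : 0 ≤ (Real.sqrt θ + δ) / (1 - δ) := by positivity
  -- sqrt of mark: c * ηs ≤ ηsR
  have hmark' : (Real.sqrt θ + δ) / (1 - δ) * ηs ≤ ηsR := by
    nlinarith [sq_nonneg ((Real.sqrt θ + δ) / (1 - δ) * ηs - ηsR),
      mul_nonneg hc hηs]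
  have hlow : (1 - δ) * η ≤ ηs := by linarith
  have key : Real.sqrt θ * η ≤ ηR := by
    have h4 : (Real.sqrt θ + δ) / (1 - δ) * ((1 - δ) * η) ≤ ηsR :=
      le_trans (by exact mul_le_mul_of_nonneg_left hlow hc) hmark'
    have h5 : (Real.sqrt θ + δ) / (1 - δ) * ((1 - δ) * η) = (Real.sqrt θ + δ) * η := by
      field_simp
    linarith [h3]
  have hθη : Real.sqrt θ * Real.sqrt θ = θ := Real.mul_self_sqrt hθ0.le
  refine ⟨⟨hlow, by linarith⟩, ?_⟩
  nlinarith [mul_nonneg hsq hη, mul_self_nonneg (Real.sqrt θ * η - ηR)]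
end

section
/- (Quasi-monotonicity of the quasi-error along algebraic solver steps.) Let u⋆, u^⋆_k ∈ X and a contractive sequence ‖u^⋆_k - u^j‖ ≤ q^{j'-j}‖u^⋆_k - u^{j}‖ hold for j ≤ j' (0 < q < 1). Suppose the estimator satisfies the stability |η(v) - η(v')| ≤ C_stab‖v - v'‖. Define H^j := ‖u⋆ - u^j‖ + ‖u^⋆_k - u^j‖ + η(u^j). Then H^{j'} ≤ (3 + 2 C_stab) H^j for all j ≤ j'. -/
/-- Quasi-monotonicity of the quasi-error along algebraic solver steps. -/
theorem quasi_error_quasi_monotonicity {X : Type*} [NormedAddCommGroup X]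
    (ustar ukstar : X) (u : ℕ → X) (q Cstab : ℝ)
    (hq0 : 0 < q) (hq1 : q < 1) (hCstab : 0 < Cstab)
    (hcontr : ∀ j j' : ℕ, j ≤ j' → ‖ukstar - u j'‖ ≤ q ^ (j' - j) * ‖ukstar - u j‖)
    (η : X → ℝ) (hηnonneg : ∀ v, 0 ≤ η v)
    (hstab : ∀ v v' : X, |η v - η v'| ≤ Cstab * ‖v - v'‖) :
    ∀ j j' : ℕ, j ≤ j' →
      ‖ustar - u j'‖ + ‖ukstar - u j'‖ + η (u j')
        ≤ (3 + 2 * Cstab) * (‖ustar - u j‖ + ‖ukstar - u j‖ + η (u j)) := by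
  intro j j' hjj'
  have hqpow : q ^ (j' - j) ≤ 1 := pow_le_one₀ hq0.le hq1.le
  have h1 : ‖ukstar - u j'‖ ≤ ‖ukstar - u j‖ := by
    calc ‖ukstar - u j'‖ ≤ q ^ (j' - j) * ‖ukstar - u j‖ := hcontr j j' hjj'
      _ ≤ 1 * ‖ukstar - u j‖ := by
        exact mul_le_mul_of_nonneg_right hqpow (norm_nonneg _)
      _ = ‖ukstar - u j‖ := one_mul _
  have hd : ‖u j - u j'‖ ≤ 2 * ‖ukstar - u j‖ := by
    calc ‖u j - u j'‖ = ‖(ukstar - u j') - (ukstar - u j)‖ := by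
          congr 1; abel
      _ ≤ ‖ukstar - u j'‖ + ‖ukstar - u j‖ := norm_sub_le _ _
      _ ≤ 2 * ‖ukstar - u j‖ := by linarith
  have h2 : ‖ustar - u j'‖ ≤ ‖ustar - u j‖ + 2 * ‖ukstar - u j‖ := by
    calc ‖ustar - u j'‖ = ‖(ustar - u j) + (u j - u j')‖ := by congr 1; abel
      _ ≤ ‖ustar - u j‖ + ‖u j - u j'‖ := norm_add_le _ _
      _ ≤ _ := by linarith
  have h3 : η (u j') - η (u j) ≤ Cstab * ‖u j' - u j‖ :=
    (abs_le.mp (hstab (u j') (u j))).2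
  rw [norm_sub_rev] at h3
  have h4 : Cstab * ‖u j - u j'‖ ≤ Cstab * (2 * ‖ukstar - u j‖) :=
    mul_le_mul_of_nonneg_left hd hCstab.le
  have := hηnonneg (u j)
  have := norm_nonneg (ustar - u j)
  have := norm_nonneg (ukstar - u j)
  nlinarith [mul_nonneg hCstab.le (norm_nonneg (ukstar - u j)),
    mul_nonneg hCstab.le (hηnonneg (u j)),
    mul_nonneg hCstab.le (norm_nonneg (ustar - u j))]
end

section
/- (Zarantonello norm contraction.) Let A : X → X' be strongly monotone with constant α and Lipschitz with constant L on a Hilbert space X, and let 0 < δ < 2α/L². Define Φ(u) ∈ X_H on a closed subspace X_H by ⟨Φ(u) - u, v⟩_X = δ(F(v) - ⟨Au, v⟩) for all v ∈ X_H (Riesz representation). Then with u⋆_H the Galerkin solution, ‖u⋆_H - Φ(u)‖² ≤ (1 - δ(2α - δL²))‖u⋆_H - u‖² for all u ∈ X_H. -/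
open RealInnerProductSpace

/-- Zarantonello norm contraction. -/
theorem zarantonello_contraction
    {X : Type*} [NormedAddCommGroup X] [InnerProductSpace ℝ X] [CompleteSpace X]
    (A : X → X →L[ℝ] ℝ) (F : X →L[ℝ] ℝ) (α L δ : ℝ)
    (hα : 0 < α) (hL : 0 < L) (hαL : α ≤ L)
    (hmono : ∀ u v : X, α * ‖u - v‖ ^ 2 ≤ A u (u - v) - A v (u - v))
    (hlip : ∀ u v w : X, |A u w - A v w| ≤ L * ‖u - v‖ * ‖w‖)
    (hδ0 : 0 < δ) (hδ : δ < 2 * α / L ^ 2)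
    (XH : Submodule ℝ X) (hXH : IsClosed (XH : Set X))
    (uHstar : X) (huH : uHstar ∈ XH) (hsol : ∀ v ∈ XH, A uHstar v = F v)
    (Φ : X → X) (hΦmem : ∀ u ∈ XH, Φ u ∈ XH)
    (hΦ : ∀ u ∈ XH, ∀ v ∈ XH, ⟪Φ u - u, v⟫ = δ * (F v - A u v)) :
    ∀ u ∈ XH,
      ‖uHstar - Φ u‖ ^ 2 ≤ (1 - δ * (2 * α - δ * L ^ 2)) * ‖uHstar - u‖ ^ 2 := by
  intro u hu
  set e := uHstar - u with he
  set d := Φ u - u with hd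
  have key : ∀ v ∈ XH, ⟪d, v⟫ = δ * (A uHstar v - A u v) := by
    intro v hv
    rw [hΦ u hu v hv, hsol v hv]
  have hde : ⟪d, e⟫ ≥ δ * α * ‖e‖ ^ 2 := by
    have h1 : ⟪d, e⟫ = δ * (A uHstar e - A u e) :=
      key e (XH.sub_mem huH hu)
    have h2 := hmono uHstar u
    rw [← he] at h2
    nlinarith [mul_le_mul_of_nonneg_left h2 hδ0.le]
  have hdd : ‖d‖ ^ 2 ≤ δ * L * ‖e‖ * ‖d‖ := by
    have h1 : ⟪d, d⟫ = δ * (A uHstar d - A u d) :=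
      key d (XH.sub_mem (hΦmem u hu) hu)
    have h2 := hlip uHstar u d
    rw [← he] at h2
    have h3 : A uHstar d - A u d ≤ L * ‖e‖ * ‖d‖ := (abs_le.mp h2).2
    have := real_inner_self_eq_norm_sq d
    nlinarith
  have hd2 : ‖d‖ ^ 2 ≤ (δ * L * ‖e‖) ^ 2 := by
    rcases le_or_gt ‖d‖ 0 with h | h
    · have : ‖d‖ = 0 := le_antisymm h (norm_nonneg _)
      rw [this]
      nlinarith [sq_nonneg (δ * L * ‖e‖)]
    · nlinarith [mul_le_mul_of_nonneg_right hdd (norm_nonneg d),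
        sq_nonneg (‖d‖ - δ * L * ‖e‖), mul_pos (mul_pos hδ0 hL) h]
  have hexp : ‖uHstar - Φ u‖ ^ 2 = ‖e‖ ^ 2 - 2 * ⟪d, e⟫ + ‖d‖ ^ 2 := by
    have : uHstar - Φ u = e - d := by rw [he, hd]; abel
    rw [this, norm_sub_sq_real, real_inner_comm]
  rw [hexp]
  nlinarith [sq_nonneg ‖e‖]
end
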